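/- (Pointwise ergodic theorem for ergodic stationary measures of a transfer operator.) Let L be a transfer operator given by weak*-continuous transition probabilities on a compact metric space X, and let μ be a probability measure that is ergodic for L* (L*μ = μ and every μ-a.e. L-invariant set has measure 0 or 1). Then for every bounded measurable φ: lim_{n→∞} (1/n) Σ_{j=0}^{n-1} (L^jφ)(x) = ∫ φ dμ for μ-a.e. x ∈ X. -/

import Mathlib

open MeasureTheory Filter

/-- The transfer operator on bounded measurable functions associated to a
family of transition probabilities `P : X → Measure X`. -/
noncomputable def Lop {X : Type*} [MeasurableSpace X]
    (P : X → Measure X) (φ : X → ℝ) : X → ℝ :=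
  fun x => ∫ y, φ y ∂(P x)

/-!
Hopf's maximal ergodic theorem holds for any Markov operator `L` with stationary
measure `μ`: writing `Sₙ f = ∑_{j<n} Lʲ f`, one has `S_{n+1} f = f + L Sₙ f`, so
`M = max_{n ≤ N} Sₙ f` satisfies `M ≤ f + L M` where `M > 0`, and integrating against `μ`
(which `L` preserves) gives `∫_{M > 0} f dμ ≥ 0`.

The upper limit `F = limsup Aₙ f` of the averages `Aₙ f = Sₙ f / n` is subharmonic,
`F ≤ L F`, because `A_{n+1} f = L Aₙ f + O(1/n)`. A bounded subharmonic function is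
harmonic `μ`-a.e., and then `∫∫ (F y - F x)² P(x, dy) dμ(x) = ∫ (L F² - F²) dμ = 0`, so
every preimage `F⁻¹ U` is invariant and ergodicity makes `F` a.e. equal to a constant `c`.
If `b < c`, then a.e. some `Sₙ (f - b)` is positive, and the maximal theorem gives
`∫ f dμ ≥ b`. Hence `limsup Aₙ f ≤ ∫ f dμ` a.e.; applied to `-f` this gives the lower
bound.
-/

open ProbabilityTheory

section BoundedSequence

variable {u v : ℕ → ℝ} {C : ℝ}

lemma isBoundedUnder_le_of_abs_le (hu : ∀ n, |u n| ≤ C) : atTop.IsBoundedUnder (· ≤ ·) u :=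
  isBoundedUnder_of ⟨C, fun n => (abs_le.1 (hu n)).2⟩

lemma isCoboundedUnder_le_of_abs_le (hu : ∀ n, |u n| ≤ C) :
    atTop.IsCoboundedUnder (· ≤ ·) u :=
  isCoboundedUnder_le_of_eventually_le _ (.of_forall fun n => (abs_le.1 (hu n)).1)

lemma abs_limsup_le_of_abs_le (hu : ∀ n, |u n| ≤ C) : |limsup u atTop| ≤ C := by
  refine abs_le.2 ⟨le_limsup_of_le (isBoundedUnder_le_of_abs_le hu) fun b hb => ?_,
    limsup_le_of_le (isCoboundedUnder_le_of_abs_le hu) (.of_forall fun n => (abs_le.1 (hu n)).2)⟩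
  obtain ⟨n, hn⟩ := hb.exists
  exact (abs_le.1 (hu n)).1.trans hn

lemma limsup_le_of_le_of_tendsto {a : ℝ} (hu : ∀ n, |u n| ≤ C) (huv : ∀ n, u n ≤ v n)
    (hv : Tendsto v atTop (nhds a)) : limsup u atTop ≤ a :=
  (limsup_le_limsup (.of_forall huv) (isCoboundedUnder_le_of_abs_le hu)
    hv.isBoundedUnder_le).trans hv.limsup_eq.le

lemma tendsto_max_sub_limsup_zero (hu : ∀ n, |u n| ≤ C) :
    Tendsto (fun n => max (u n - limsup u atTop) 0) atTop (nhds 0) := by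
  refine tendsto_order.2 ⟨fun a ha => .of_forall fun n => ha.trans_le (le_max_right _ _),
    fun a ha => ?_⟩
  filter_upwards [eventually_lt_of_limsup_lt (lt_add_of_pos_right _ ha)
    (isBoundedUnder_le_of_abs_le hu)] with n hn
  exact max_lt (by linarith) ha

end BoundedSequence

lemma abs_sq_le_of_abs_le {a C : ℝ} (h : |a| ≤ C) : |a ^ 2| ≤ C ^ 2 := by
  rw [abs_pow]
  exact pow_le_pow_left₀ (abs_nonneg _) h 2

section Markov

variable {X : Type*} [MeasurableSpace X] {κ : Kernel X X} {μ ν : Measure X} {f g F : X → ℝ}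
  {C : ℝ}

lemma integrable_of_abs_le (hfm : Measurable f) (hfC : ∀ x, |f x| ≤ C) (ν : Measure X)
    [IsFiniteMeasure ν] : Integrable f ν :=
  .of_bound hfm.aestronglyMeasurable C (.of_forall hfC)

/-- Reverse Fatou lemma with `εₙ = ∫ max (uₙ - limsup u) 0`, which tends to `0` by dominated
convergence. -/
lemma exists_integral_le_integral_limsup_add [IsFiniteMeasure ν] {u : ℕ → X → ℝ}
    (hum : ∀ n, Measurable (u n)) (huC : ∀ n y, |u n y| ≤ C) :
    ∃ ε : ℕ → ℝ, Tendsto ε atTop (nhds 0) ∧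
      ∀ n, ∫ y, u n y ∂ν ≤ ∫ y, limsup (fun k => u k y) atTop ∂ν + ε n := by
  set G : X → ℝ := fun y => limsup (fun k => u k y) atTop
  set δ : ℕ → X → ℝ := fun n y => max (u n y - G y) 0
  have hGm : Measurable G := .limsup hum
  have hGC : ∀ y, |G y| ≤ C := fun y => abs_limsup_le_of_abs_le fun n => huC n y
  have hδm : ∀ n, Measurable (δ n) := fun n => ((hum n).sub hGm).max measurable_const
  have hδC : ∀ n y, |δ n y| ≤ 2 * C := fun n y => by
    rw [abs_of_nonneg (le_max_right _ _)]
    exact max_le (by linarith [abs_le.1 (huC n y), abs_le.1 (hGC y)])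
      (by linarith [abs_nonneg (G y), hGC y])
  refine ⟨fun n => ∫ y, δ n y ∂ν, ?_, fun n => ?_⟩
  · simpa using tendsto_integral_of_dominated_convergence (fun _ => 2 * C)
      (fun n => (hδm n).aestronglyMeasurable) (integrable_const _)
      (fun n => .of_forall fun y => by simpa using hδC n y)
      (.of_forall fun y => tendsto_max_sub_limsup_zero fun n => huC n y)
  · have hGi := integrable_of_abs_le hGm hGC ν
    have hδi := integrable_of_abs_le (hδm n) (hδC n) ν
    rw [← integral_add hGi hδi]
    refine integral_mono (integrable_of_abs_le (hum n) (huC n) ν) (hGi.add hδi) fun y => ?_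
    linarith [le_max_left (u n y - G y) 0]

section MarkovOperator

lemma measurable_Lop (hfm : Measurable f) : Measurable (Lop κ f) :=
  (hfm.stronglyMeasurable.integral_kernel (κ := κ)).measurable

lemma Lop_neg : Lop κ (-f) = -Lop κ f := by
  funext x; exact integral_neg f

lemma Lop_smul (c : ℝ) : Lop κ (c • f) = c • Lop κ f := by
  funext x; exact integral_smul c f

lemma Lop_add (hf : ∀ x, Integrable f (κ x)) (hg : ∀ x, Integrable g (κ x)) :
    Lop κ (f + g) = Lop κ f + Lop κ g := by
  funext x; exact integral_add (hf x) (hg x)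

lemma Lop_sub (hf : ∀ x, Integrable f (κ x)) (hg : ∀ x, Integrable g (κ x)) :
    Lop κ (f - g) = Lop κ f - Lop κ g := by
  funext x; exact integral_sub (hf x) (hg x)

lemma Lop_mono (hf : ∀ x, Integrable f (κ x)) (hg : ∀ x, Integrable g (κ x)) (hfg : f ≤ g) :
    Lop κ f ≤ Lop κ g :=
  fun x => integral_mono (hf x) (hg x) hfg

lemma Lop_nonneg (hf : 0 ≤ f) : 0 ≤ Lop κ f :=
  fun _ => integral_nonneg hf

lemma integral_Lop (hμ : μ.bind κ = μ) (hf : Integrable f μ) :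
    ∫ x, Lop κ f x ∂μ = ∫ x, f x ∂μ := by
  rw [← hμ, Measure.comp_eq_comp_const_apply] at hf
  conv_rhs => rw [← hμ, Measure.comp_eq_comp_const_apply, Kernel.integral_comp hf]
  simp [Lop]

lemma measurable_Lop_iterate (hfm : Measurable f) (n : ℕ) : Measurable ((Lop κ)^[n] f) := by
  induction n with
  | zero => exact hfm
  | succ n ih => rw [Function.iterate_succ_apply']; exact measurable_Lop ih

lemma Lop_iterate_neg (n : ℕ) : (Lop κ)^[n] (-f) = -(Lop κ)^[n] f := by
  induction n with
  | zero => rfl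
  | succ n ih => rw [Function.iterate_succ_apply', Function.iterate_succ_apply', ih, Lop_neg]

variable [IsMarkovKernel κ]

lemma abs_Lop_le (hfC : ∀ x, |f x| ≤ C) (x : X) : |Lop κ f x| ≤ C := by
  simpa [Lop] using norm_integral_le_of_norm_le_const (μ := κ x) (f := f) (.of_forall hfC)

lemma Lop_const (c : ℝ) : Lop κ (fun _ => c) = fun _ => c := by
  funext x; simp [Lop]

lemma abs_Lop_iterate_le (hfC : ∀ x, |f x| ≤ C) (n : ℕ) (x : X) :
    |(Lop κ)^[n] f x| ≤ C := by
  induction n generalizing x with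
  | zero => exact hfC x
  | succ n ih => rw [Function.iterate_succ_apply']; exact abs_Lop_le ih x

lemma integrable_Lop_iterate (hfm : Measurable f) (hfC : ∀ x, |f x| ≤ C) (n : ℕ)
    (ν : Measure X) [IsFiniteMeasure ν] : Integrable ((Lop κ)^[n] f) ν :=
  integrable_of_abs_le (measurable_Lop_iterate hfm n) (abs_Lop_iterate_le hfC n) ν

lemma Lop_iterate_sub_const (hfm : Measurable f) (hfC : ∀ x, |f x| ≤ C) (b : ℝ) (n : ℕ) :
    (Lop κ)^[n] (f - fun _ => b) = (Lop κ)^[n] f - fun _ => b := by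
  induction n with
  | zero => rfl
  | succ n ih =>
    rw [Function.iterate_succ_apply', Function.iterate_succ_apply', ih,
      Lop_sub (fun _ => integrable_Lop_iterate hfm hfC n _) (fun _ => integrable_const b),
      Lop_const]

end MarkovOperator

section BirkhoffSum

lemma birkhoffSum_Lop_apply (n : ℕ) (x : X) :
    birkhoffSum (Lop κ) id n f x = ∑ j ∈ Finset.range n, (Lop κ)^[j] f x := by
  simp [birkhoffSum, Finset.sum_apply]

lemma measurable_birkhoffSum_Lop (hfm : Measurable f) (n : ℕ) :
    Measurable (birkhoffSum (Lop κ) id n f) := by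
  rw [funext (birkhoffSum_Lop_apply n)]
  exact Finset.measurable_sum _ fun j _ => measurable_Lop_iterate hfm j

lemma birkhoffAverage_Lop_apply (n : ℕ) (x : X) :
    birkhoffAverage ℝ (Lop κ) id n f x = (∑ j ∈ Finset.range n, (Lop κ)^[j] f x) / n := by
  rw [birkhoffAverage, Pi.smul_apply, birkhoffSum_Lop_apply, smul_eq_mul, inv_mul_eq_div]

lemma measurable_birkhoffAverage_Lop (hfm : Measurable f) (n : ℕ) :
    Measurable (birkhoffAverage ℝ (Lop κ) id n f) :=
  (measurable_birkhoffSum_Lop hfm n).const_smul _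

lemma birkhoffAverage_Lop_neg (n : ℕ) :
    birkhoffAverage ℝ (Lop κ) id n (-f) = -birkhoffAverage ℝ (Lop κ) id n f := by
  simp [birkhoffAverage, birkhoffSum, Lop_iterate_neg]

variable [IsMarkovKernel κ]

lemma abs_birkhoffSum_Lop_le (hfC : ∀ x, |f x| ≤ C) (n : ℕ) (x : X) :
    |birkhoffSum (Lop κ) id n f x| ≤ n * C := by
  rw [birkhoffSum_Lop_apply]
  calc |∑ j ∈ Finset.range n, (Lop κ)^[j] f x|
        ≤ ∑ j ∈ Finset.range n, |(Lop κ)^[j] f x| := Finset.abs_sum_le_sum_abs _ _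
    _ ≤ ∑ _j ∈ Finset.range n, C := Finset.sum_le_sum fun j _ => abs_Lop_iterate_le hfC j x
    _ = n * C := by simp

lemma Lop_birkhoffSum (hfm : Measurable f) (hfC : ∀ x, |f x| ≤ C) (n : ℕ) :
    Lop κ (birkhoffSum (Lop κ) id n f) = birkhoffSum (Lop κ) id n (Lop κ f) := by
  funext x
  simp only [Lop, birkhoffSum_Lop_apply]
  rw [integral_finsetSum _ fun j _ => integrable_Lop_iterate hfm hfC j _]
  refine Finset.sum_congr rfl fun j _ => ?_
  rw [← Function.iterate_succ_apply, Function.iterate_succ_apply']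
  rfl

lemma birkhoffSum_succ_Lop (hfm : Measurable f) (hfC : ∀ x, |f x| ≤ C) (n : ℕ) :
    birkhoffSum (Lop κ) id (n + 1) f = f + Lop κ (birkhoffSum (Lop κ) id n f) := by
  rw [birkhoffSum_succ', Lop_birkhoffSum hfm hfC, id]

lemma birkhoffSum_sub_const (hfm : Measurable f) (hfC : ∀ x, |f x| ≤ C) (b : ℝ) (n : ℕ)
    (x : X) :
    birkhoffSum (Lop κ) id n (f - fun _ => b) x = birkhoffSum (Lop κ) id n f x - n * b := by
  simp [birkhoffSum_Lop_apply, Lop_iterate_sub_const hfm hfC, Finset.sum_sub_distrib]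

lemma abs_birkhoffAverage_Lop_le (hfC : ∀ x, |f x| ≤ C) (n : ℕ) (x : X) :
    |birkhoffAverage ℝ (Lop κ) id n f x| ≤ C := by
  rcases Nat.eq_zero_or_pos n with rfl | hn
  · simpa using (abs_nonneg _).trans (hfC x)
  rw [birkhoffAverage, Pi.smul_apply, smul_eq_mul, abs_mul, abs_inv, Nat.abs_cast,
    inv_mul_le_iff₀ (by positivity)]
  exact abs_birkhoffSum_Lop_le hfC n x

lemma birkhoffAverage_succ_le_Lop (hfm : Measurable f) (hfC : ∀ x, |f x| ≤ C) (n : ℕ)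
    (x : X) :
    birkhoffAverage ℝ (Lop κ) id (n + 1) f x ≤
      Lop κ (birkhoffAverage ℝ (Lop κ) id n f) x + 2 * C / (n + 1) := by
  set a := Lop κ (birkhoffAverage ℝ (Lop κ) id n f) x
  have hsum : birkhoffSum (Lop κ) id n f = (n : ℝ) • birkhoffAverage ℝ (Lop κ) id n f := by
    rcases Nat.eq_zero_or_pos n with rfl | hn
    · simp
    · rw [birkhoffAverage, smul_inv_smul₀ (by positivity)]
  have hsucc : birkhoffAverage ℝ (Lop κ) id (n + 1) f x = a + (f x - a) / (n + 1) := by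
    rw [birkhoffAverage, birkhoffSum_succ_Lop hfm hfC, hsum, Lop_smul]
    simp only [Pi.smul_apply, Pi.add_apply, smul_eq_mul, Nat.cast_add, Nat.cast_one]
    field_simp
    ring
  have ha : |a| ≤ C := abs_Lop_le (abs_birkhoffAverage_Lop_le hfC n) x
  rw [hsucc]
  gcongr
  linarith [abs_le.1 (hfC x), abs_le.1 ha]

end BirkhoffSum

section MaximalErgodic

noncomputable def maxBirkhoffSum (κ : Kernel X X) (N : ℕ) (f : X → ℝ) (x : X) : ℝ :=
  (Finset.range (N + 1)).sup' Finset.nonempty_range_add_one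
    fun n => birkhoffSum (Lop κ) id n f x

lemma birkhoffSum_le_maxBirkhoffSum {n N : ℕ} (hn : n ≤ N) (x : X) :
    birkhoffSum (Lop κ) id n f x ≤ maxBirkhoffSum κ N f x :=
  Finset.le_sup' (fun n => birkhoffSum (Lop κ) id n f x) (Finset.mem_range_succ_iff.2 hn)

lemma maxBirkhoffSum_nonneg (N : ℕ) (x : X) : 0 ≤ maxBirkhoffSum κ N f x := by
  simpa using birkhoffSum_le_maxBirkhoffSum (κ := κ) (f := f) (Nat.zero_le N) x

lemma exists_birkhoffSum_eq_maxBirkhoffSum (N : ℕ) (x : X) :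
    ∃ n ≤ N, birkhoffSum (Lop κ) id n f x = maxBirkhoffSum κ N f x := by
  obtain ⟨n, hn, hmax⟩ := Finset.exists_mem_eq_sup' Finset.nonempty_range_add_one
    fun n => birkhoffSum (Lop κ) id n f x
  exact ⟨n, Finset.mem_range_succ_iff.1 hn, hmax.symm⟩

lemma monotone_maxBirkhoffSum (x : X) : Monotone fun N => maxBirkhoffSum κ N f x :=
  fun _ _ hNM => Finset.sup'_mono _ (Finset.range_subset_range.2 (Nat.succ_le_succ hNM)) _

lemma measurable_maxBirkhoffSum (hfm : Measurable f) (N : ℕ) :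
    Measurable (maxBirkhoffSum κ N f) :=
  Finset.measurable_range_sup'' fun n _ => measurable_birkhoffSum_Lop hfm n

variable [IsMarkovKernel κ]

lemma abs_maxBirkhoffSum_le (hfC : ∀ x, |f x| ≤ C) (N : ℕ) (x : X) :
    |maxBirkhoffSum κ N f x| ≤ N * C := by
  have hC : 0 ≤ C := (abs_nonneg _).trans (hfC x)
  obtain ⟨n, hn, hmax⟩ := exists_birkhoffSum_eq_maxBirkhoffSum (κ := κ) (f := f) N x
  rw [← hmax]
  exact (abs_birkhoffSum_Lop_le hfC n x).trans (by gcongr)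

lemma maxBirkhoffSum_le_add_Lop (hfm : Measurable f) (hfC : ∀ x, |f x| ≤ C) {N : ℕ} {x : X}
    (hx : 0 < maxBirkhoffSum κ N f x) :
    maxBirkhoffSum κ N f x ≤ f x + Lop κ (maxBirkhoffSum κ N f) x := by
  obtain ⟨n, hn, hmax⟩ := exists_birkhoffSum_eq_maxBirkhoffSum (κ := κ) (f := f) N x
  rw [← hmax] at hx ⊢
  obtain ⟨k, rfl⟩ : ∃ k, n = k + 1 :=
    Nat.exists_eq_add_one.2 (Nat.pos_of_ne_zero (by rintro rfl; simp at hx))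
  have hle : birkhoffSum (Lop κ) id k f ≤ maxBirkhoffSum κ N f :=
    fun y => birkhoffSum_le_maxBirkhoffSum (by omega) y
  have hmono := Lop_mono (κ := κ)
    (fun _ => integrable_of_abs_le (measurable_birkhoffSum_Lop hfm k)
      (abs_birkhoffSum_Lop_le hfC k) _)
    (fun _ => integrable_of_abs_le (measurable_maxBirkhoffSum hfm N)
      (abs_maxBirkhoffSum_le hfC N) _) hle x
  rw [birkhoffSum_succ_Lop hfm hfC, Pi.add_apply]
  exact add_le_add_right hmono _

variable [IsFiniteMeasure μ]

lemma setIntegral_maxBirkhoffSum_pos_nonneg (hμ : μ.bind κ = μ) (hfm : Measurable f)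
    (hfC : ∀ x, |f x| ≤ C) (N : ℕ) :
    0 ≤ ∫ x in {x | 0 < maxBirkhoffSum κ N f x}, f x ∂μ := by
  set M := maxBirkhoffSum κ N f
  have hMm : Measurable M := measurable_maxBirkhoffSum hfm N
  have hMC : ∀ x, |M x| ≤ N * C := abs_maxBirkhoffSum_le hfC N
  have hMi : Integrable M μ := integrable_of_abs_le hMm hMC μ
  have hLMi : Integrable (Lop κ M) μ :=
    integrable_of_abs_le (measurable_Lop hMm) (abs_Lop_le hMC) μ
  calc 0 = ∫ x, M x ∂μ - ∫ x, Lop κ M x ∂μ := by rw [integral_Lop hμ hMi, sub_self]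
    _ ≤ ∫ x in {x | 0 < M x}, M x ∂μ - ∫ x in {x | 0 < M x}, Lop κ M x ∂μ := by
      rw [setIntegral_eq_integral_of_forall_compl_eq_zero (s := {x | 0 < M x}) (f := M)
        fun x hx => le_antisymm (not_lt.1 hx) (maxBirkhoffSum_nonneg N x)]
      gcongr
      exacts [.of_forall (Lop_nonneg (maxBirkhoffSum_nonneg N)), Measure.restrict_le_self]
    _ = ∫ x in {x | 0 < M x}, (M x - Lop κ M x) ∂μ :=
      (integral_sub hMi.integrableOn hLMi.integrableOn).symm
    _ ≤ ∫ x in {x | 0 < M x}, f x ∂μ := by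
      refine setIntegral_mono_on (hMi.sub hLMi).integrableOn
        (integrable_of_abs_le hfm hfC μ).integrableOn (measurableSet_lt measurable_const hMm)
        fun x hx => ?_
      linarith [maxBirkhoffSum_le_add_Lop hfm hfC hx]

lemma setIntegral_exists_birkhoffSum_pos_nonneg (hμ : μ.bind κ = μ) (hfm : Measurable f)
    (hfC : ∀ x, |f x| ≤ C) :
    0 ≤ ∫ x in {x | ∃ n, 0 < birkhoffSum (Lop κ) id n f x}, f x ∂μ := by
  have hunion : {x | ∃ n, 0 < birkhoffSum (Lop κ) id n f x} =
      ⋃ N, {x | 0 < maxBirkhoffSum κ N f x} := by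
    ext x
    simp only [Set.mem_ofPred_eq, Set.mem_iUnion]
    refine ⟨fun ⟨n, hn⟩ => ⟨n, hn.trans_le (birkhoffSum_le_maxBirkhoffSum le_rfl x)⟩,
      fun ⟨N, hN⟩ => ?_⟩
    obtain ⟨n, -, hmax⟩ := exists_birkhoffSum_eq_maxBirkhoffSum (κ := κ) (f := f) N x
    exact ⟨n, hmax ▸ hN⟩
  rw [hunion]
  refine ge_of_tendsto' (tendsto_setIntegral_of_monotone
    (fun N => measurableSet_lt measurable_const (measurable_maxBirkhoffSum hfm N))
    (fun N M hNM x hx => lt_of_lt_of_le hx (monotone_maxBirkhoffSum x hNM))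
    (integrable_of_abs_le hfm hfC μ).integrableOn)
    (setIntegral_maxBirkhoffSum_pos_nonneg hμ hfm hfC)

lemma integral_nonneg_of_ae_exists_birkhoffSum_pos (hμ : μ.bind κ = μ) (hfm : Measurable f)
    (hfC : ∀ x, |f x| ≤ C) (hpos : ∀ᵐ x ∂μ, ∃ n, 0 < birkhoffSum (Lop κ) id n f x) :
    0 ≤ ∫ x, f x ∂μ := by
  have h := setIntegral_exists_birkhoffSum_pos_nonneg hμ hfm hfC
  rwa [Measure.restrict_eq_self_of_ae_mem (s := {x | ∃ n, 0 < birkhoffSum (Lop κ) id n f x})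
    hpos] at h

end MaximalErgodic

section InvariantFunctions

variable [IsMarkovKernel κ]

lemma integral_sub_sq_eq_Lop (hFm : Measurable F) (hFC : ∀ x, |F x| ≤ C) (x : X) :
    ∫ y, (F y - F x) ^ 2 ∂κ x =
      Lop κ (fun y => F y ^ 2) x - 2 * F x * Lop κ F x + F x ^ 2 := by
  have hF2i : Integrable (fun y => F y ^ 2) (κ x) :=
    integrable_of_abs_le (hFm.pow_const 2) (fun y => abs_sq_le_of_abs_le (hFC y)) _
  have hcross : Integrable (fun y => 2 * F y * F x) (κ x) :=
    ((integrable_of_abs_le hFm hFC _).const_mul 2).mul_const (F x)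
  have hdiff : Integrable (fun y => F y ^ 2 - 2 * F y * F x) (κ x) := hF2i.sub hcross
  simp only [Lop, sub_sq]
  rw [integral_add hdiff (integrable_const _), integral_sub hF2i hcross,
    integral_mul_const, integral_const_mul]
  simp only [integral_const, probReal_univ, one_smul]
  ring

lemma Lop_comp_ae_eq (h : ∀ᵐ x ∂μ, ∀ᵐ y ∂κ x, F y = F x) (g : ℝ → ℝ) :
    Lop κ (g ∘ F) =ᵐ[μ] g ∘ F := by
  filter_upwards [h] with x hx
  calc Lop κ (g ∘ F) x = ∫ _y, g (F x) ∂κ x :=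
        integral_congr_ae (hx.mono fun y hy => by simp [hy])
    _ = g (F x) := by simp

variable [IsFiniteMeasure μ]

lemma Lop_ae_eq_of_ae_le (hμ : μ.bind κ = μ) (hFm : Measurable F) (hFC : ∀ x, |F x| ≤ C)
    (hle : F ≤ᵐ[μ] Lop κ F) : Lop κ F =ᵐ[μ] F := by
  have hFi : Integrable F μ := integrable_of_abs_le hFm hFC μ
  have hLFi : Integrable (Lop κ F) μ :=
    integrable_of_abs_le (measurable_Lop hFm) (abs_Lop_le hFC) μ
  have hzero : Lop κ F - F =ᵐ[μ] 0 := by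
    refine (integral_eq_zero_iff_of_nonneg_ae (hle.mono fun x hx => ?_) (hLFi.sub hFi)).1 ?_
    · simpa using hx
    · rw [integral_sub' hLFi hFi, integral_Lop hμ hFi, sub_self]
  filter_upwards [hzero] with x hx
  simpa [sub_eq_zero] using hx

lemma ae_ae_eq_of_Lop_ae_eq (hμ : μ.bind κ = μ) (hFm : Measurable F) (hFC : ∀ x, |F x| ≤ C)
    (hinv : Lop κ F =ᵐ[μ] F) : ∀ᵐ x ∂μ, ∀ᵐ y ∂κ x, F y = F x := by
  have hF2m : Measurable fun y => F y ^ 2 := hFm.pow_const 2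
  have hF2i : Integrable (fun y => F y ^ 2) μ :=
    integrable_of_abs_le hF2m (fun y => abs_sq_le_of_abs_le (hFC y)) μ
  have hLF2i : Integrable (Lop κ fun y => F y ^ 2) μ := integrable_of_abs_le
    (measurable_Lop hF2m) (abs_Lop_le fun y => abs_sq_le_of_abs_le (hFC y)) μ
  set D : X → ℝ := fun x => ∫ y, (F y - F x) ^ 2 ∂κ x
  have hD : D =ᵐ[μ] (Lop κ fun y => F y ^ 2) - fun y => F y ^ 2 := by
    filter_upwards [hinv] with x hx
    simp only [D, integral_sub_sq_eq_Lop hFm hFC, hx, Pi.sub_apply]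
    ring
  have hDzero : D =ᵐ[μ] 0 := by
    refine (integral_eq_zero_iff_of_nonneg (fun x => integral_nonneg fun y => sq_nonneg _)
      ((hLF2i.sub hF2i).congr hD.symm)).1 ?_
    rw [integral_congr_ae hD, integral_sub' hLF2i hF2i, integral_Lop hμ hF2i, sub_self]
  filter_upwards [hDzero] with x hx
  have hsqC : ∀ y, |(F y - F x) ^ 2| ≤ (C + C) ^ 2 := fun y =>
    abs_sq_le_of_abs_le ((abs_sub _ _).trans (add_le_add (hFC y) (hFC x)))
  filter_upwards [(integral_eq_zero_iff_of_nonneg (fun y => sq_nonneg (F y - F x))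
    (integrable_of_abs_le ((hFm.sub measurable_const).pow_const 2) hsqC _)).1 hx] with y hy
  simpa [sub_eq_zero] using hy

end InvariantFunctions

def IsErgodicMeasure (κ : Kernel X X) (μ : Measure X) : Prop :=
  μ.bind κ = μ ∧ ∀ A, MeasurableSet A →
    (Lop κ (A.indicator fun _ => (1 : ℝ)) =ᵐ[μ] A.indicator fun _ => (1 : ℝ)) →
    μ A = 0 ∨ μ A = 1

section Ergodic

variable [IsMarkovKernel κ] [IsProbabilityMeasure μ]

lemma IsErgodicMeasure.ae_eq_const_of_Lop_ae_eq (herg : IsErgodicMeasure κ μ)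
    (hFm : Measurable F) (hFC : ∀ x, |F x| ≤ C) (hinv : Lop κ F =ᵐ[μ] F) :
    ∃ c, F =ᵐ[μ] fun _ => c := by
  have hF := ae_ae_eq_of_Lop_ae_eq herg.1 hFm hFC hinv
  refine exists_eventuallyEq_const_of_forall_separating MeasurableSet fun U hU => ?_
  have hcomp : (U.indicator fun _ => (1 : ℝ)) ∘ F = (F ⁻¹' U).indicator fun _ => 1 := by
    ext x; exact (Set.indicator_comp_right (f := F) (x := x)).symm
  have hind := Lop_comp_ae_eq hF (U.indicator fun _ => (1 : ℝ))
  rw [hcomp] at hind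
  rcases herg.2 _ (hFm hU) hind with h0 | h1
  · exact .inr (measure_eq_zero_iff_ae_notMem.1 h0)
  · exact .inl ((ae_mem_iff_measure_eq (hFm hU).nullMeasurableSet).2 (by simpa using h1))

end Ergodic

section LimsupBirkhoffAverage

noncomputable def limsupBirkhoffAverage (κ : Kernel X X) (f : X → ℝ) (x : X) : ℝ :=
  limsup (fun n => birkhoffAverage ℝ (Lop κ) id n f x) atTop

lemma measurable_limsupBirkhoffAverage (hfm : Measurable f) :
    Measurable (limsupBirkhoffAverage κ f) :=
  .limsup fun n => measurable_birkhoffAverage_Lop hfm n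

variable [IsMarkovKernel κ]

lemma abs_limsupBirkhoffAverage_le (hfC : ∀ x, |f x| ≤ C) (x : X) :
    |limsupBirkhoffAverage κ f x| ≤ C :=
  abs_limsup_le_of_abs_le fun n => abs_birkhoffAverage_Lop_le hfC n x

lemma limsupBirkhoffAverage_le_Lop (hfm : Measurable f) (hfC : ∀ x, |f x| ≤ C) (x : X) :
    limsupBirkhoffAverage κ f x ≤ Lop κ (limsupBirkhoffAverage κ f) x := by
  obtain ⟨ε, hε, hle⟩ := exists_integral_le_integral_limsup_add (ν := κ x)
    (measurable_birkhoffAverage_Lop hfm) (abs_birkhoffAverage_Lop_le (κ := κ) hfC)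
  rw [limsupBirkhoffAverage, ← limsup_nat_add _ 1]
  set G := limsupBirkhoffAverage κ f
  have hlim : Tendsto (fun n : ℕ => Lop κ G x + ε n + 2 * C / (n + 1)) atTop
      (nhds (Lop κ G x)) := by
    simpa [div_eq_mul_inv] using (tendsto_const_nhds.add hε).add
      (tendsto_one_div_add_atTop_nhds_zero_nat.const_mul (2 * C))
  refine limsup_le_of_le_of_tendsto (fun n => abs_birkhoffAverage_Lop_le hfC (n + 1) x)
    (fun n => (birkhoffAverage_succ_le_Lop hfm hfC n x).trans ?_) hlim
  linarith [show Lop κ _ x ≤ Lop κ G x + ε n from hle n]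

variable [IsProbabilityMeasure μ]

lemma IsErgodicMeasure.ae_limsupBirkhoffAverage_le_integral (herg : IsErgodicMeasure κ μ)
    (hfm : Measurable f) (hfC : ∀ x, |f x| ≤ C) :
    ∀ᵐ x ∂μ, limsupBirkhoffAverage κ f x ≤ ∫ y, f y ∂μ := by
  have hGm := measurable_limsupBirkhoffAverage (κ := κ) hfm
  have hGC := abs_limsupBirkhoffAverage_le (κ := κ) hfC
  obtain ⟨c, hc⟩ := herg.ae_eq_const_of_Lop_ae_eq hGm hGC
    (Lop_ae_eq_of_ae_le herg.1 hGm hGC (.of_forall (limsupBirkhoffAverage_le_Lop hfm hfC)))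
  suffices c ≤ ∫ y, f y ∂μ from hc.mono fun x hx => hx.trans_le this
  refine le_of_forall_lt_imp_le_of_dense fun b hb => ?_
  have hpos : ∀ᵐ x ∂μ, ∃ n, 0 < birkhoffSum (Lop κ) id n (f - fun _ => b) x := by
    filter_upwards [hc] with x hx
    obtain ⟨n, hbn, hn⟩ := ((frequently_lt_of_lt_limsup
      (isCoboundedUnder_le_of_abs_le fun n => abs_birkhoffAverage_Lop_le hfC n x)
      (hx.symm ▸ hb)).and_eventually (eventually_gt_atTop 0)).exists
    refine ⟨n, ?_⟩
    rw [birkhoffAverage_Lop_apply, ← birkhoffSum_Lop_apply, lt_div_iff₀ (by positivity)] at hbn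
    rw [birkhoffSum_sub_const hfm hfC, sub_pos]
    linarith
  have hint := integral_nonneg_of_ae_exists_birkhoffSum_pos (C := C + |b|) herg.1
    (hfm.sub measurable_const) (fun x => (abs_sub (f x) b).trans (by linarith [hfC x])) hpos
  rw [integral_sub' (integrable_of_abs_le hfm hfC μ) (integrable_const b), integral_const] at hint
  simp only [probReal_univ, one_smul] at hint
  linarith

end LimsupBirkhoffAverage

end Markov

theorem stmt_14_general {X : Type*}
    [MeasurableSpace X]
    (P : X → Measure X) (hPprob : ∀ x, IsProbabilityMeasure (P x))
    (hPmeas : Measurable P)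
    (μ : Measure X) [IsProbabilityMeasure μ] (hstat : μ.bind P = μ)
    (φ : X → ℝ) (hφm : Measurable φ) (hφb : ∃ C, ∀ x, |φ x| ≤ C)
    (herg : ∀ A : Set X, MeasurableSet A →
      (Lop P (A.indicator fun _ => (1 : ℝ)) =ᵐ[μ] A.indicator fun _ => (1 : ℝ)) →
      μ A = 0 ∨ μ A = 1) :
    ∀ᵐ x ∂μ, Tendsto
      (fun n : ℕ => (∑ j ∈ Finset.range n, (Lop P)^[j] φ x) / (n : ℝ))
      atTop (nhds (∫ y, φ y ∂μ)) := by
  obtain ⟨C, hφC⟩ := hφb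
  let κ : Kernel X X := ⟨P, hPmeas⟩
  have : IsMarkovKernel κ := ⟨hPprob⟩
  have hκ : IsErgodicMeasure κ μ := ⟨hstat, herg⟩
  have hnegC : ∀ x, |(-φ) x| ≤ C := fun x => by simpa using hφC x
  filter_upwards [hκ.ae_limsupBirkhoffAverage_le_integral hφm hφC,
    hκ.ae_limsupBirkhoffAverage_le_integral hφm.neg hnegC] with x hupper hlower
  refine (tendsto_congr fun n => birkhoffAverage_Lop_apply (κ := κ) n x).1
    (tendsto_order.2 ⟨fun b hb => ?_, fun b hb => eventually_lt_of_limsup_lt (hupper.trans_lt hb)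
      (isBoundedUnder_le_of_abs_le fun n => abs_birkhoffAverage_Lop_le hφC n x)⟩)
  rw [integral_neg'] at hlower
  filter_upwards [eventually_lt_of_limsup_lt (hlower.trans_lt (neg_lt_neg hb))
    (isBoundedUnder_le_of_abs_le fun n => abs_birkhoffAverage_Lop_le hnegC n x)] with n hn
  rw [birkhoffAverage_Lop_neg] at hn
  exact lt_of_neg_lt_neg hn

theorem stmt_14 {X : Type*} [MetricSpace X] [CompactSpace X]
    [MeasurableSpace X] [BorelSpace X]
    (P : X → Measure X) (hPprob : ∀ x, IsProbabilityMeasure (P x))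
    (hPmeas : Measurable P)
    (μ : Measure X) [IsProbabilityMeasure μ] (hstat : μ.bind P = μ)
    (φ : X → ℝ) (hφm : Measurable φ) (hφb : ∃ C, ∀ x, |φ x| ≤ C)
    (hPcont : ∀ f : C(X, ℝ), Continuous fun x => ∫ y, f y ∂(P x))
    (herg : ∀ A : Set X, MeasurableSet A →
      (Lop P (A.indicator fun _ => (1 : ℝ)) =ᵐ[μ] A.indicator fun _ => (1 : ℝ)) →
      μ A = 0 ∨ μ A = 1) :
    ∀ᵐ x ∂μ, Tendsto
      (fun n : ℕ => (∑ j ∈ Finset.range n, (Lop P)^[j] φ x) / (n : ℝ))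
      atTop (nhds (∫ y, φ y ∂μ)) :=
  stmt_14_general P hPprob hPmeas μ hstat φ hφm hφb herg
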